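/- arXiv:1705.03494 — 6 statements merged into one kernel-verified Lean document; each statement's English description precedes it below -/
import Mathlib

section
/- Let x = (x₀, …, x_{n−1}) ∈ ℝⁿ and suppose that for every j = 1, …, n the cyclic correlation sum ∑_{i=0}^{n−1} x_i · x_{(i+j−1) mod n} is nonnegative. Then the spectral norm of the circulant matrix C(x) equals |x₀ + x₁ + ⋯ + x_{n−1}|. -/
/-!
`C(x)` is the transpose of Mathlib's `circulant x`, whose Gram matrix `(circulant x)ᵀ * circulant x`
is the circulant matrix of the cyclic autocorrelation `r t = ∑ i, x i * x (i + t)`. When `r ≥ 0`,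
Schur's test bounds the norm of this Gram matrix by `∑ t, r t = (∑ i, x i)²`, so
`‖C(x)‖ ≤ |∑ i, x i|`. Conversely, the all-ones vector is an eigenvector with eigenvalue `∑ i, x i`.
-/

open scoped Matrix.Norms.L2Operator

section Autocorrelation

variable {G α : Type*} [AddCommGroup G] [Fintype G] [NonUnitalNonAssocSemiring α]

def autocorrelation (x : G → α) (t : G) : α :=
  ∑ i, x i * x (i + t)

theorem sum_autocorrelation (x : G → α) :
    ∑ t, autocorrelation x t = (∑ i, x i) * ∑ i, x i := by
  rw [Finset.sum_mul]
  unfold autocorrelation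
  rw [Finset.sum_comm]
  refine Finset.sum_congr rfl fun i _ => ?_
  rw [← Finset.mul_sum]
  exact congrArg _ (Fintype.sum_equiv (Equiv.addLeft i) _ _ fun _ => rfl)

end Autocorrelation

namespace Matrix

section L2OpNorm

variable {m n 𝕜 : Type*} [Fintype m] [Fintype n] [RCLike 𝕜]

theorem l2_opNorm_le_of_sum_norm_le [DecidableEq n] (A : Matrix m n 𝕜) {c : ℝ} (hc : 0 ≤ c)
    (hrow : ∀ i, ∑ j, ‖A i j‖ ≤ c) (hcol : ∀ j, ∑ i, ‖A i j‖ ≤ c) : ‖A‖ ≤ c := by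
  rw [l2_opNorm_def]
  refine ContinuousLinearMap.opNorm_le_bound _ hc fun v => ?_
  have hentry (i : m) : ‖(A *ᵥ v) i‖ ^ 2 ≤ c * ∑ j, ‖A i j‖ * ‖v j‖ ^ 2 := calc
    ‖(A *ᵥ v) i‖ ^ 2 ≤ (∑ j, ‖A i j‖ * ‖v j‖) ^ 2 := by
      gcongr
      exact (norm_sum_le _ _).trans_eq (by simp [norm_mul])
    _ ≤ (∑ j, ‖A i j‖) * ∑ j, ‖A i j‖ * ‖v j‖ ^ 2 :=
      Finset.sum_sq_le_sum_mul_sum_of_sq_le_mul _ (fun _ _ => norm_nonneg _)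
        (fun _ _ => by positivity) (fun _ _ => le_of_eq (by ring))
    _ ≤ c * ∑ j, ‖A i j‖ * ‖v j‖ ^ 2 := mul_le_mul_of_nonneg_right (hrow i) (by positivity)
  rw [← sq_le_sq₀ (norm_nonneg _) (by positivity), mul_pow, EuclideanSpace.norm_sq_eq,
    EuclideanSpace.norm_sq_eq]
  calc ∑ i, ‖(A *ᵥ v) i‖ ^ 2 ≤ ∑ i, c * ∑ j, ‖A i j‖ * ‖v j‖ ^ 2 :=
        Finset.sum_le_sum fun i _ => hentry i
    _ = c * ∑ j, (∑ i, ‖A i j‖) * ‖v j‖ ^ 2 := by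
      rw [← Finset.mul_sum, Finset.sum_comm]; simp_rw [Finset.sum_mul]
    _ ≤ c * ∑ j, c * ‖v j‖ ^ 2 := by gcongr with j; exact hcol j
    _ = c ^ 2 * ∑ j, ‖v j‖ ^ 2 := by rw [← Finset.mul_sum]; ring

theorem norm_le_l2_opNorm_of_mulVec_eq_smul [DecidableEq n] (A : Matrix n n 𝕜) {v : n → 𝕜}
    {μ : 𝕜} (hv : v ≠ 0) (hAv : A *ᵥ v = μ • v) : ‖μ‖ ≤ ‖A‖ := by
  have h := A.l2_opNorm_mulVec (WithLp.toLp 2 v)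
  have hpos : 0 < ‖WithLp.toLp 2 v‖ := by simpa using hv
  rw [WithLp.ofLp_toLp, hAv, map_smul, norm_smul] at h
  exact le_of_mul_le_mul_right h hpos

end L2OpNorm

section Circulant

variable {G : Type*} [AddCommGroup G] [Fintype G]

theorem transpose_circulant_mul_circulant {α : Type*} [NonUnitalNonAssocSemiring α] (x : G → α) :
    (circulant x)ᵀ * circulant x = circulant (autocorrelation x) := by
  ext i j
  simp only [mul_apply, transpose_apply, circulant_apply, autocorrelation]
  exact Fintype.sum_equiv (Equiv.subRight i) _ _ fun k => by simp

theorem sum_circulant_apply_right {α : Type*} [AddCommMonoid α] (v : G → α) (i : G) :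
    ∑ j, circulant v i j = ∑ j, v j :=
  Fintype.sum_equiv (Equiv.subLeft i) _ _ fun _ => rfl

theorem sum_circulant_apply_left {α : Type*} [AddCommMonoid α] (v : G → α) (j : G) :
    ∑ i, circulant v i j = ∑ i, v i :=
  Fintype.sum_equiv (Equiv.subRight j) _ _ fun _ => rfl

theorem circulant_mulVec_one {α : Type*} [NonAssocSemiring α] (v : G → α) :
    circulant v *ᵥ 1 = (∑ i, v i) • 1 := by
  ext i
  simpa [mulVec, dotProduct] using sum_circulant_apply_right v i

variable [DecidableEq G] {𝕜 : Type*} [RCLike 𝕜]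

theorem l2_opNorm_circulant_le (v : G → 𝕜) : ‖circulant v‖ ≤ ∑ i, ‖v i‖ :=
  l2_opNorm_le_of_sum_norm_le _ (by positivity)
    (fun i => (sum_circulant_apply_right (‖v ·‖) i).le)
    (fun j => (sum_circulant_apply_left (‖v ·‖) j).le)

theorem norm_sum_le_l2_opNorm_circulant (v : G → 𝕜) : ‖∑ i, v i‖ ≤ ‖circulant v‖ :=
  norm_le_l2_opNorm_of_mulVec_eq_smul _ one_ne_zero (circulant_mulVec_one v)

theorem l2_opNorm_circulant_eq_abs_sum {x : G → ℝ} (hx : ∀ t, 0 ≤ autocorrelation x t) :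
    ‖circulant x‖ = |∑ i, x i| := by
  refine le_antisymm ?_ (norm_sum_le_l2_opNorm_circulant x)
  have hgram : ‖circulant x‖ * ‖circulant x‖ = ‖circulant (autocorrelation x)‖ := by
    rw [← l2_opNorm_conjTranspose_mul_self, conjTranspose_eq_transpose_of_trivial,
      transpose_circulant_mul_circulant]
  have hsq : ‖circulant x‖ * ‖circulant x‖ ≤ |∑ i, x i| * |∑ i, x i| := calc
    _ ≤ ∑ t, ‖autocorrelation x t‖ := hgram ▸ l2_opNorm_circulant_le _
    _ = ∑ t, autocorrelation x t := by simp_rw [Real.norm_of_nonneg (hx _)]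
    _ = |∑ i, x i| * |∑ i, x i| := by rw [sum_autocorrelation, abs_mul_abs_self]
  exact (mul_self_le_mul_self_iff (norm_nonneg _) (abs_nonneg _)).mpr hsq

end Circulant

end Matrix

theorem spectral_norm_circulant_of_nonneg_cyclic_correlations
    (n : ℕ) (x : Fin n → ℝ)
    (hx : ∀ j : Fin n, 0 ≤ ∑ i, x i * x (i + j)) :
    ‖(Matrix.of fun i j : Fin n => x (j - i))‖ = |∑ i, x i| := by
  rcases n.eq_zero_or_pos with rfl | hn
  · simp [Subsingleton.elim _ (0 : Matrix (Fin 0) (Fin 0) ℝ)]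
  have : NeZero n := ⟨hn.ne'⟩
  have hC : (Matrix.of fun i j : Fin n => x (j - i)) = (Matrix.circulant x).conjTranspose := rfl
  rw [hC, Matrix.l2_opNorm_conjTranspose]
  exact Matrix.l2_opNorm_circulant_eq_abs_sum hx
end

section
/- Let (h_n) be the Horadam sequence with h₀ = a, h₁ = b, and h_n = p·h_{n−1} + q·h_{n−2}, where p + q = 1 and p ≠ 2 (so q ≠ −1). Then for every n ≥ 1, h₀ + ⋯ + h_{n−1} = (q·h_{n−1} + (n−1)·(q·a + b) + a) / (q + 1). -/
/-! When `p + q = 1`, the recurrence `h (m + 2) = p h (m + 1) + q h m` forces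
`h (m + 1) + q h m` is constant, equal to `h 1 + q h 0`. Summing this invariant over
`m < n` expresses `(q + 1) (h 0 + ⋯ + h n)` through `h n` alone; dividing by `q + 1`, which
is nonzero because `p ≠ 2`, gives the closed form. -/

section Horadam

variable {R : Type*} [CommRing R] {p q : R} {h : ℕ → R}

theorem horadam_add_mul_eq_of_add_eq_one (hpq : p + q = 1)
    (hrec : ∀ m : ℕ, h (m + 2) = p * h (m + 1) + q * h m) (m : ℕ) :
    h (m + 1) + q * h m = h 1 + q * h 0 := by
  induction m with
  | zero => rfl
  | succ k ih =>
    rw [hrec k]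
    linear_combination ih + h (k + 1) * hpq

theorem horadam_mul_sum_range_succ (hpq : p + q = 1)
    (hrec : ∀ m : ℕ, h (m + 2) = p * h (m + 1) + q * h m) (n : ℕ) :
    (q + 1) * ∑ k ∈ Finset.range (n + 1), h k = q * h n + n * (q * h 0 + h 1) + h 0 := by
  induction n with
  | zero => simp only [zero_add, Finset.sum_range_one, Nat.cast_zero]; ring
  | succ k ih =>
    rw [Finset.sum_range_succ, mul_add, ih]
    push_cast
    linear_combination horadam_add_mul_eq_of_add_eq_one hpq hrec k

end Horadam

theorem horadam_sum_of_p_add_q_eq_one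
    (a b p q : ℤ) (hpq : p + q = 1) (hp : p ≠ 2)
    (h : ℕ → ℤ) (h0 : h 0 = a) (h1 : h 1 = b)
    (hrec : ∀ m : ℕ, h (m + 2) = p * h (m + 1) + q * h m)
    (n : ℕ) (hn : 1 ≤ n) :
    (∑ k ∈ Finset.range n, (h k : ℚ)) =
      (q * h (n - 1) + ((n : ℚ) - 1) * (q * a + b) + a) / (q + 1) := by
  have hq : (q : ℚ) + 1 ≠ 0 := by exact_mod_cast (show q + 1 ≠ 0 by omega)
  have hpqℚ : (p : ℚ) + q = 1 := by exact_mod_cast hpq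
  have hrecℚ : ∀ m : ℕ, (h (m + 2) : ℚ) = p * h (m + 1) + q * h m := by
    intro m
    exact_mod_cast hrec m
  obtain ⟨m, rfl⟩ := Nat.exists_eq_add_of_le' hn
  rw [eq_div_iff hq, mul_comm, horadam_mul_sum_range_succ hpqℚ hrecℚ, h0, h1]
  push_cast
  ring
end

section
/- Let a, b, p, q be integers with p + q ≠ 1, and let (h_n) be the Horadam sequence h₀ = a, h₁ = b, h_n = p·h_{n−1} + q·h_{n−2}. Assume h₀, …, h_{n−1} are all nonnegative. Then the spectral norm of the circulant matrix C(h₀, …, h_{n−1}) equals (h_n + q·h_{n−1} + (p−1)·a − b) / (p + q − 1). -/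
/-!
The circulant matrix of a nonnegative vector has every row and every column summing to
`S = h₀ + ⋯ + h_{n-1}`, so Schur's test bounds its spectral norm by `S`, while the all-ones
vector is an eigenvector for `S`; hence the norm is exactly `S`. For a Horadam sequence the
recurrence telescopes to `(p + q - 1) S = h_n + q h_{n-1} + (p - 1) h₀ - h₁`.
-/

open scoped Matrix.Norms.L2Operator

open Finset Matrix

theorem horadam_mul_sum_range {R : Type*} [CommRing R] (p q : R) (h : ℕ → R)
    (hrec : ∀ m, h (m + 2) = p * h (m + 1) + q * h m) (m : ℕ) :
    (p + q - 1) * ∑ k ∈ range (m + 1), h k = h (m + 1) + q * h m + (p - 1) * h 0 - h 1 := by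
  induction m with
  | zero => simp only [zero_add, range_one, sum_singleton]; ring
  | succ m ih =>
    rw [sum_range_succ, mul_add, ih, hrec]
    ring

namespace Matrix

variable {n : Type*} [Fintype n] [DecidableEq n]

/-- Schur's test: Cauchy–Schwarz with weights `|A i j|` gives
`(A x)_i ^ 2 ≤ (∑ j, |A i j|) * ∑ j, |A i j| * x_j ^ 2`, then sum over `i`. -/
theorem l2_opNorm_le_of_abs_row_col_sums_le (A : Matrix n n ℝ) {S : ℝ} (hS : 0 ≤ S)
    (hrow : ∀ i, ∑ j, |A i j| ≤ S) (hcol : ∀ j, ∑ i, |A i j| ≤ S) : ‖A‖ ≤ S := by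
  rw [← l2_opNorm_toEuclideanCLM]
  refine ContinuousLinearMap.opNorm_le_bound _ hS fun x => ?_
  refine (sq_le_sq₀ (norm_nonneg _) (by positivity)).mp ?_
  set y := x.ofLp
  have hrow_sq : ∀ i, (A *ᵥ y) i ^ 2 ≤ S * ∑ j, |A i j| * y j ^ 2 := fun i =>
    calc (A *ᵥ y) i ^ 2 ≤ (∑ j, |A i j|) * ∑ j, |A i j| * y j ^ 2 :=
          sum_sq_le_sum_mul_sum_of_sq_le_mul _ (fun j _ => abs_nonneg _)
            (fun j _ => by positivity) (fun j _ => by rw [mul_pow, ← sq_abs (A i j)]; nlinarith)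
      _ ≤ S * ∑ j, |A i j| * y j ^ 2 :=
          mul_le_mul_of_nonneg_right (hrow i) (sum_nonneg fun j _ => by positivity)
  calc ‖toEuclideanCLM (𝕜 := ℝ) A x‖ ^ 2 = ∑ i, (A *ᵥ y) i ^ 2 := by
        simp [EuclideanSpace.norm_sq_eq, y]
    _ ≤ ∑ i, S * ∑ j, |A i j| * y j ^ 2 := sum_le_sum fun i _ => hrow_sq i
    _ = S * ∑ j, (∑ i, |A i j|) * y j ^ 2 := by
        rw [← mul_sum, sum_comm]
        simp only [sum_mul]
    _ ≤ S * ∑ j, S * y j ^ 2 := by gcongr with j; exact hcol j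
    _ = (S * ‖x‖) ^ 2 := by
        rw [← mul_sum, mul_pow, EuclideanSpace.norm_sq_eq]
        simp only [Real.norm_eq_abs, sq_abs, y]
        ring

theorem abs_le_l2_opNorm_of_row_sums_eq [Nonempty n] (A : Matrix n n ℝ) {S : ℝ}
    (hrow : ∀ i, ∑ j, A i j = S) : |S| ≤ ‖A‖ := by
  set x : EuclideanSpace ℝ n := WithLp.toLp 2 fun _ => 1
  have hx : 0 < ‖x‖ := norm_pos_iff.mpr (by simp [x, funext_iff])
  have hAx : toEuclideanCLM (𝕜 := ℝ) A x = S • x := by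
    ext i
    simp [x, mulVec, dotProduct, hrow i]
  have := (toEuclideanCLM (𝕜 := ℝ) A).le_opNorm x
  rw [hAx, norm_smul, Real.norm_eq_abs, l2_opNorm_toEuclideanCLM] at this
  exact le_of_mul_le_mul_right this hx

theorem l2_opNorm_eq_of_nonneg_of_row_col_sums_eq [Nonempty n] (A : Matrix n n ℝ) {S : ℝ}
    (hA : ∀ i j, 0 ≤ A i j) (hrow : ∀ i, ∑ j, A i j = S) (hcol : ∀ j, ∑ i, A i j = S) :
    ‖A‖ = S := by
  have hS : 0 ≤ S := hrow (Classical.arbitrary n) ▸ sum_nonneg fun j _ => hA _ j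
  refine le_antisymm (l2_opNorm_le_of_abs_row_col_sums_le A hS ?_ ?_) ?_
  · exact fun i => by simp only [abs_of_nonneg (hA i _), hrow i, le_refl]
  · exact fun j => by simp only [abs_of_nonneg (hA _ j), hcol j, le_refl]
  · simpa [abs_of_nonneg hS] using abs_le_l2_opNorm_of_row_sums_eq A hrow

end Matrix

theorem spectral_norm_circulant_horadam
    (a b p q : ℤ) (hpq : p + q ≠ 1)
    (h : ℕ → ℤ) (h0 : h 0 = a) (h1 : h 1 = b)
    (hrec : ∀ m : ℕ, h (m + 2) = p * h (m + 1) + q * h m)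
    (n : ℕ) (hn : 1 ≤ n)
    (hnonneg : ∀ k < n, 0 ≤ h k) :
    ‖(Matrix.of fun i j : Fin n => (h ((j - i : Fin n) : ℕ) : ℝ))‖ =
      ((h n : ℝ) + q * h (n - 1) + (p - 1) * a - b) / (p + q - 1) := by
  obtain ⟨m, rfl⟩ : ∃ m, n = m + 1 := ⟨n - 1, by omega⟩
  have hnorm : ‖(Matrix.of fun i j : Fin (m + 1) => (h ((j - i : Fin (m + 1)) : ℕ) : ℝ))‖ =
      ∑ k : Fin (m + 1), (h k : ℝ) :=
    l2_opNorm_eq_of_nonneg_of_row_col_sums_eq _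
      (fun i j => Int.cast_nonneg_iff.mpr (hnonneg _ (j - i).isLt))
      (fun i => Fintype.sum_equiv (Equiv.subRight i) _ _ fun _ => rfl)
      (fun j => Fintype.sum_equiv (Equiv.subLeft j) _ _ fun _ => rfl)
  have hsum := horadam_mul_sum_range (p : ℝ) q (fun k => (h k : ℝ))
    (fun k => by exact_mod_cast hrec k) m
  have hpq' : (p + q - 1 : ℝ) ≠ 0 := by
    rw [sub_ne_zero]; exact_mod_cast hpq
  rw [hnorm, Fin.sum_univ_eq_sum_range (fun k => (h k : ℝ)), Nat.add_sub_cancel, ← h0, ← h1,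
    ← hsum, mul_div_cancel_left₀ _ hpq']
end

section
/- Let F_k denote the Fibonacci numbers (F₀ = 0, F₁ = 1, F_k = F_{k−1} + F_{k−2}). The spectral norm of the n×n circulant matrix C(F₀, F₁, …, F_{n−1}) equals F_{n+1} − 1. -/
/-!
Every row and every column of a circulant matrix `C(v)` sums to `s = ∑ vₖ`. For a matrix with
nonnegative entries, Cauchy–Schwarz on each row (the Schur test) bounds the spectral norm by the
geometric mean of the largest row and column sums, here `s`; conversely the all-ones vector is
an eigenvector with eigenvalue `s`. For `vₖ = F_{-k mod n}` the sum is
`F₀ + ⋯ + F_{n-1} = F_{n+1} - 1`.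
-/

open scoped Matrix.Norms.L2Operator
open Finset Matrix

namespace Matrix

variable {m n : Type*} [Fintype m] [Fintype n]

theorem sum_sq_mulVec_le_of_rowSum_le_of_colSum_le {A : Matrix m n ℝ} {r c : ℝ}
    (hA : ∀ i j, 0 ≤ A i j) (hr₀ : 0 ≤ r) (hr : ∀ i, ∑ j, A i j ≤ r) (hc : ∀ j, ∑ i, A i j ≤ c)
    (x : n → ℝ) : ∑ i, (A *ᵥ x) i ^ 2 ≤ r * c * ∑ j, x j ^ 2 :=
  calc ∑ i, (A *ᵥ x) i ^ 2
      ≤ ∑ i, (∑ j, A i j) * ∑ j, A i j * x j ^ 2 := by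
        gcongr with i
        exact sum_sq_le_sum_mul_sum_of_sq_le_mul _ (fun j _ => hA i j)
          (fun j _ => mul_nonneg (hA i j) (sq_nonneg _)) fun j _ => le_of_eq (by ring)
    _ ≤ ∑ i, r * ∑ j, A i j * x j ^ 2 := by
        gcongr with i
        · exact sum_nonneg fun j _ => mul_nonneg (hA i j) (sq_nonneg _)
        · exact hr i
    _ = r * ∑ j, (∑ i, A i j) * x j ^ 2 := by
        simp only [← mul_sum, sum_mul]
        rw [sum_comm]
    _ ≤ r * ∑ j, c * x j ^ 2 := by
        gcongr with j
        exact hc j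
    _ = r * c * ∑ j, x j ^ 2 := by rw [mul_assoc, ← mul_sum]

theorem l2_opNorm_le_sqrt_of_rowSum_le_of_colSum_le [DecidableEq n]
    {A : Matrix m n ℝ} {r c : ℝ}
    (hA : ∀ i j, 0 ≤ A i j) (hr : ∀ i, ∑ j, A i j ≤ r) (hc : ∀ j, ∑ i, A i j ≤ c) :
    ‖A‖ ≤ √(r * c) := by
  rcases isEmpty_or_nonempty m with hm | ⟨⟨i₀⟩⟩
  · simp [Subsingleton.elim A 0]
  have hr₀ : 0 ≤ r := (sum_nonneg fun j _ => hA i₀ j).trans (hr i₀)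
  rw [l2_opNorm_def]
  refine ContinuousLinearMap.opNorm_le_bound _ (Real.sqrt_nonneg _) fun x => ?_
  rw [← Real.sqrt_sq (norm_nonneg x), ← Real.sqrt_mul' _ (sq_nonneg _),
    ← Real.sqrt_sq (norm_nonneg _)]
  gcongr
  simpa [EuclideanSpace.real_norm_sq_eq] using
    sum_sq_mulVec_le_of_rowSum_le_of_colSum_le hA hr₀ hr hc x

theorem norm_le_l2_opNorm_of_mulVec_eq_smul_s12 [DecidableEq n] {𝕜 : Type*} [RCLike 𝕜]
    {A : Matrix n n 𝕜} {μ : 𝕜} {x : n → 𝕜} (hx : x ≠ 0) (hAx : A *ᵥ x = μ • x) : ‖μ‖ ≤ ‖A‖ := by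
  have hx' : 0 < ‖(EuclideanSpace.equiv n 𝕜).symm x‖ := by simpa using hx
  refine le_of_mul_le_mul_right ?_ hx'
  simpa [hAx, norm_smul] using A.l2_opNorm_mulVec ((EuclideanSpace.equiv n 𝕜).symm x)

theorem l2_opNorm_eq_of_rowSum_eq_of_colSum_eq [DecidableEq n] [Nonempty n]
    {A : Matrix n n ℝ} {r : ℝ}
    (hA : ∀ i j, 0 ≤ A i j) (hr : ∀ i, ∑ j, A i j = r) (hc : ∀ j, ∑ i, A i j = r) :
    ‖A‖ = r := by
  have hr₀ : 0 ≤ r := hr (Classical.arbitrary n) ▸ sum_nonneg fun j _ => hA _ j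
  refine le_antisymm ?_ ?_
  · simpa [Real.sqrt_mul_self hr₀] using
      l2_opNorm_le_sqrt_of_rowSum_le_of_colSum_le hA (fun i => (hr i).le) fun j => (hc j).le
  · have hA1 : A *ᵥ 1 = r • 1 := by
      ext i
      simp [mulVec, dotProduct, hr i]
    simpa [abs_of_nonneg hr₀] using norm_le_l2_opNorm_of_mulVec_eq_smul_s12 one_ne_zero hA1

theorem l2_opNorm_circulant [DecidableEq n] [AddGroup n] [Nonempty n] {v : n → ℝ}
    (hv : ∀ i, 0 ≤ v i) :
    ‖circulant v‖ = ∑ i, v i :=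
  l2_opNorm_eq_of_rowSum_eq_of_colSum_eq (fun i j => hv (i - j))
    (fun i => Fintype.sum_equiv (Equiv.subLeft i) _ _ fun _ => rfl)
    fun j => Fintype.sum_equiv (Equiv.subRight j) _ _ fun _ => rfl

end Matrix

theorem spectral_norm_circulant_fibonacci (n : ℕ) (hn : 1 ≤ n) :
    ‖(Matrix.of fun i j : Fin n => (Nat.fib ((j - i : Fin n) : ℕ) : ℝ))‖ =
      (Nat.fib (n + 1) : ℝ) - 1 := by
  have : NeZero n := ⟨Nat.one_le_iff_ne_zero.mp hn⟩
  have hcirc : (Matrix.of fun i j : Fin n => (Nat.fib ((j - i : Fin n) : ℕ) : ℝ)) =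
      circulant fun k => (Nat.fib ((-k : Fin n) : ℕ) : ℝ) := by
    ext i j
    simp [circulant_apply]
  rw [hcirc, l2_opNorm_circulant fun _ => Nat.cast_nonneg _]
  calc ∑ k : Fin n, (Nat.fib ((-k : Fin n) : ℕ) : ℝ)
      = ∑ k : Fin n, (Nat.fib k : ℝ) := Fintype.sum_equiv (Equiv.neg _) _ _ fun _ => rfl
    _ = ∑ k ∈ range n, (Nat.fib k : ℝ) :=
        Fin.sum_univ_eq_sum_range (fun k => (Nat.fib k : ℝ)) n
    _ = Nat.fib (n + 1) - 1 := by
        rw [Nat.fib_succ_eq_succ_sum]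
        push_cast
        ring
end

section
/- Let p, q ≥ 1 be integers and (f̃_n) defined by f̃₀ = 0, f̃₁ = 1, f̃_n = p·f̃_{n−1} + q·f̃_{n−2}. Then the spectral norm of the circulant matrix C(f̃₀, …, f̃_{n−1}) equals (f̃_n + q·f̃_{n−1} − 1) / (p + q − 1). -/
/-!
A matrix with entries `v (j - i)` is `∑ k, v k • P k`, where `P k` is the permutation matrix of
translation by `k`, an isometry. For `v ≥ 0` the triangle inequality bounds its spectral norm by
`∑ k, v k`, and the all-ones vector, an eigenvector for the eigenvalue `∑ k, v k`, attains it.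
For the generalized Fibonacci numbers, summing the recurrence telescopes to
`(p + q - 1) * (f 0 + ⋯ + f m) = f (m + 1) + q * f m - 1`.
-/

open scoped Matrix.Norms.L2Operator

namespace Matrix

variable {G : Type*} [AddGroup G] [Fintype G] [DecidableEq G]

theorem of_sub_eq_sum_smul_permMatrix {R : Type*} [Semiring R] (v : G → R) :
    of (fun i j => v (j - i)) = ∑ k, v k • (Equiv.addLeft k).permMatrix R := by
  ext i j
  simp [sum_apply, PEquiv.toMatrix_apply, ← eq_sub_iff_add_eq]

theorem l2_opNorm_of_sub_le (v : G → ℝ) :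
    ‖of fun i j => v (j - i)‖ ≤ ∑ k, ‖v k‖ := by
  rw [of_sub_eq_sum_smul_permMatrix]
  calc ‖∑ k, v k • (Equiv.addLeft k).permMatrix ℝ‖
      ≤ ∑ k, ‖v k‖ * ‖(Equiv.addLeft k).permMatrix ℝ‖ :=
        (norm_sum_le _ _).trans (Finset.sum_le_sum fun k _ => norm_smul_le _ _)
    _ ≤ ∑ k, ‖v k‖ := Finset.sum_le_sum fun k _ =>
        mul_le_of_le_one_right (norm_nonneg _) (permMatrix_l2_opNorm_le _)

theorem sum_le_l2_opNorm_of_sub (v : G → ℝ) :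
    ∑ k, v k ≤ ‖of fun i j => v (j - i)‖ := by
  set ones : EuclideanSpace ℝ G := WithLp.toLp 2 fun _ => 1
  have hrow : (EuclideanSpace.equiv G ℝ).symm ((of fun i j => v (j - i)) *ᵥ ones)
      = (∑ k, v k) • ones := by
    ext i
    simpa [ones, mulVec, dotProduct] using
      Fintype.sum_equiv (Equiv.subRight i) _ _ fun _ => rfl
  have hones : 0 < ‖ones‖ := by
    inhabit G
    exact norm_pos_iff.2 fun h => one_ne_zero (congrFun (congrArg WithLp.ofLp h) default)
  have h := l2_opNorm_mulVec (of fun i j => v (j - i)) ones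
  rw [hrow, norm_smul, Real.norm_eq_abs] at h
  exact (le_abs_self _).trans (le_of_mul_le_mul_right h hones)

theorem l2_opNorm_of_sub_of_nonneg (v : G → ℝ) (hv : ∀ k, 0 ≤ v k) :
    ‖of fun i j => v (j - i)‖ = ∑ k, v k := by
  refine le_antisymm ?_ (sum_le_l2_opNorm_of_sub v)
  simpa only [Real.norm_of_nonneg (hv _)] using l2_opNorm_of_sub_le v

end Matrix

section SecondOrderRecurrence

variable {R : Type*} {p q : R} {f : ℕ → R}

theorem nonneg_of_recurrence [Semiring R] [PartialOrder R] [IsOrderedRing R]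
    (hp : 0 ≤ p) (hq : 0 ≤ q) (hf0 : 0 ≤ f 0) (hf1 : 0 ≤ f 1)
    (hfrec : ∀ m, f (m + 2) = p * f (m + 1) + q * f m) (m : ℕ) : 0 ≤ f m := by
  induction m using Nat.twoStepInduction with
  | zero => exact hf0
  | one => exact hf1
  | more m ih₀ ih₁ => rw [hfrec]; positivity

theorem mul_sum_range_of_recurrence [CommRing R] (hf0 : f 0 = 0) (hf1 : f 1 = 1)
    (hfrec : ∀ m, f (m + 2) = p * f (m + 1) + q * f m) (m : ℕ) :
    (p + q - 1) * ∑ k ∈ Finset.range (m + 1), f k = f (m + 1) + q * f m - 1 := by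
  induction m with
  | zero => simp [hf0, hf1]
  | succ m ih =>
    rw [Finset.sum_range_succ, mul_add, ih, hfrec]
    ring

end SecondOrderRecurrence

theorem spectral_norm_circulant_generalized_fibonacci
    (p q : ℤ) (hp : 1 ≤ p) (hq : 1 ≤ q)
    (f : ℕ → ℤ) (hf0 : f 0 = 0) (hf1 : f 1 = 1)
    (hfrec : ∀ m : ℕ, f (m + 2) = p * f (m + 1) + q * f m)
    (n : ℕ) (hn : 1 ≤ n) :
    ‖(Matrix.of fun i j : Fin n => (f ((j - i : Fin n) : ℕ) : ℝ))‖ =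
      ((f n : ℝ) + q * f (n - 1) - 1) / (p + q - 1) := by
  obtain ⟨m, rfl⟩ : ∃ m, n = m + 1 := ⟨n - 1, by omega⟩
  have hf_nonneg : ∀ k, 0 ≤ f k := nonneg_of_recurrence (by omega) (by omega)
    hf0.ge (by omega) hfrec
  have hpq : (p : ℝ) + q - 1 ≠ 0 := by
    have : (1 : ℝ) < p + q := by exact_mod_cast (by omega : 1 < p + q)
    linarith
  rw [Matrix.l2_opNorm_of_sub_of_nonneg (fun k : Fin (m + 1) => (f k : ℝ))
      fun k => by exact_mod_cast hf_nonneg k,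
    Fin.sum_univ_eq_sum_range (fun k => (f k : ℝ)), Nat.add_sub_cancel, eq_div_iff hpq, mul_comm]
  exact_mod_cast mul_sum_range_of_recurrence hf0 hf1 hfrec m
end

section
/- Let p, q ≥ 1 be integers, b = 1, and a ≥ 0 an integer, with (h_n) the Horadam sequence h₀ = a, h₁ = 1, h_n = p·h_{n−1} + q·h_{n−2}. Then the spectral norm of C(h₀, …, h_{n−1}) equals (h_n + q·h_{n−1} + (p−1)·a − 1) / (p + q − 1). -/
/-!
A circulant matrix is the combination `∑ₖ vₖ Pₖ` of the cyclic shift permutation matrices, each of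
spectral norm at most `1`, so `‖circ v‖ ≤ ∑ₖ |vₖ|`; on the other hand the all-ones vector is an
eigenvector with eigenvalue `∑ₖ vₖ`. For nonnegative entries the two bounds meet, and the spectral
norm is the sum `h₀ + ⋯ + h_{n-1}`. The Horadam terms are nonnegative since `a, p, q ≥ 0`, and
summing the recurrence telescopes to the closed form.
-/

open scoped Matrix.Norms.L2Operator

namespace Matrix

variable {𝕜 n : Type*} [Fintype n] [AddCommGroup n]

theorem circulant_mulVec_const {α : Type*} [NonUnitalNonAssocSemiring α] (v : n → α) (c : α) :
    circulant v *ᵥ (fun _ => c) = fun _ => (∑ k, v k) * c := by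
  ext i
  rw [mulVec, dotProduct, ← Finset.sum_mul]
  congr 1
  exact Fintype.sum_equiv (Equiv.subLeft i) _ _ fun j => rfl

variable [RCLike 𝕜] [DecidableEq n]

theorem circulant_eq_sum_smul_permMatrix (v : n → 𝕜) :
    circulant v = ∑ k, v k • Equiv.Perm.permMatrix 𝕜 (Equiv.subRight k) := by
  ext i j
  simp [circulant_apply, sum_apply, PEquiv.toMatrix_apply, sub_eq_iff_comm (a := i)]

theorem norm_circulant_le (v : n → 𝕜) : ‖circulant v‖ ≤ ∑ k, ‖v k‖ := by
  rw [circulant_eq_sum_smul_permMatrix]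
  refine (norm_sum_le _ _).trans (Finset.sum_le_sum fun k _ => ?_)
  rw [norm_smul]
  exact mul_le_of_le_one_right (norm_nonneg _) (permMatrix_l2_opNorm_le _)

theorem norm_sum_le_norm_circulant [Nonempty n] (v : n → 𝕜) : ‖∑ k, v k‖ ≤ ‖circulant v‖ := by
  have h := l2_opNorm_mulVec (circulant v) (WithLp.toLp 2 fun _ => 1)
  simp only [circulant_mulVec_const, mul_one, PiLp.continuousLinearEquiv_symm_apply,
    EuclideanSpace.norm_eq, Finset.sum_const, Finset.card_univ, nsmul_eq_mul, Nat.cast_nonneg,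
    Real.sqrt_mul, norm_nonneg, Real.sqrt_sq, norm_one, one_pow] at h
  rw [mul_comm] at h
  exact le_of_mul_le_mul_right h (Real.sqrt_pos.2 (Nat.cast_pos.2 Fintype.card_pos))

theorem norm_circulant_of_nonneg [Nonempty n] {v : n → ℝ} (hv : ∀ k, 0 ≤ v k) :
    ‖circulant v‖ = ∑ k, v k := by
  refine le_antisymm ((norm_circulant_le v).trans_eq ?_) ?_
  · simp [abs_of_nonneg (hv _)]
  · simpa [abs_of_nonneg (Finset.sum_nonneg fun k _ => hv k)] using norm_sum_le_norm_circulant v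

end Matrix

section Recurrence

variable {R : Type*} {p q : R} {h : ℕ → R}

theorem nonneg_of_two_step_recurrence [Semiring R] [PartialOrder R] [IsOrderedRing R]
    (hp : 0 ≤ p) (hq : 0 ≤ q) (h0 : 0 ≤ h 0) (h1 : 0 ≤ h 1)
    (hrec : ∀ m, h (m + 2) = p * h (m + 1) + q * h m) (k : ℕ) : 0 ≤ h k := by
  induction k using Nat.twoStepInduction with
  | zero => exact h0
  | one => exact h1
  | more m ih₀ ih₁ => rw [hrec]; exact add_nonneg (mul_nonneg hp ih₁) (mul_nonneg hq ih₀)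

theorem mul_sum_range_succ_of_two_step_recurrence [CommRing R]
    (hrec : ∀ m, h (m + 2) = p * h (m + 1) + q * h m) (n : ℕ) :
    (p + q - 1) * ∑ k ∈ Finset.range (n + 1), h k = h (n + 1) + q * h n + (p - 1) * h 0 - h 1 := by
  induction n with
  | zero => rw [zero_add, Finset.sum_range_one]; ring
  | succ m ih => rw [Finset.sum_range_succ, mul_add, ih, hrec]; ring

end Recurrence

theorem spectral_norm_circulant_horadam_b_one
    (a p q : ℤ) (ha : 0 ≤ a) (hp : 1 ≤ p) (hq : 1 ≤ q)
    (h : ℕ → ℤ) (h0 : h 0 = a) (h1 : h 1 = 1)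
    (hrec : ∀ m : ℕ, h (m + 2) = p * h (m + 1) + q * h m)
    (n : ℕ) (hn : 1 ≤ n) :
    ‖(Matrix.of fun i j : Fin n => (h ((j - i : Fin n) : ℕ) : ℝ))‖ =
      ((h n : ℝ) + q * h (n - 1) + (p - 1) * a - 1) / (p + q - 1) := by
  obtain ⟨m, rfl⟩ : ∃ m, n = m + 1 := ⟨n - 1, by omega⟩
  have hnonneg : ∀ k, 0 ≤ h k :=
    nonneg_of_two_step_recurrence (by omega) (by omega) (h0 ▸ ha) (by omega) hrec
  have hcirc : (Matrix.of fun i j : Fin (m + 1) => (h ((j - i : Fin (m + 1)) : ℕ) : ℝ)) =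
      Matrix.circulant fun k => (h ((-k : Fin (m + 1)) : ℕ) : ℝ) := by
    ext i j
    simp [Matrix.circulant_apply]
  have hsum : ∑ k : Fin (m + 1), (h ((-k : Fin (m + 1)) : ℕ) : ℝ) =
      ∑ k ∈ Finset.range (m + 1), (h k : ℝ) :=
    (Equiv.sum_comp (Equiv.neg _) _).trans (Fin.sum_univ_eq_sum_range (fun k => (h k : ℝ)) _)
  have hrecℝ : ∀ k, (h (k + 2) : ℝ) = p * h (k + 1) + q * h k := fun k => by
    exact_mod_cast hrec k
  have hpq : (p + q - 1 : ℝ) ≠ 0 := by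
    have : (1 : ℝ) ≤ p + q - 1 := by exact_mod_cast (show (1 : ℤ) ≤ p + q - 1 by omega)
    linarith
  rw [hcirc, Matrix.norm_circulant_of_nonneg fun k => by exact_mod_cast hnonneg _, hsum,
    eq_div_iff hpq, mul_comm, mul_sum_range_succ_of_two_step_recurrence hrecℝ, h0, h1]
  simp
end
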